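/- arXiv:math/0702779 — 2 statements merged into one kernel-verified Lean document; each statement's English description precedes it below -/
import Mathlib

section
/- Consider the vector autoregression X_t = Σ_{l=1}^{k-1} A_l X_{t-l} + μ D_t + ε_t (i.e. A_k = 0) with deterministic term satisfying D_t = D·D_{t-1} for an invertible matrix D. Let X_{t-1}^{bold} = (X_{t-1}', ..., X_{t-k+1}')'. Then, assuming all relevant Gram matrices are invertible, the quadratic form decomposition Q(X_{t-k} | X_{t-1}^{bold}, D_t) = Q(X_{t-2}^{bold} | D_t) - Q(X_{t-1}^{bold} | D_t) + Q(ε_{t-1} | X_{t-2}^{bold}, D_t) holds, where Q(Z) = (Σ ε_t Z_t')(Σ Z_t Z_t')^{-1}(Σ Z_t ε_t') and (Y|X) denotes least-squares residuals of Y on X. -/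
open Matrix Finset

/-- `Σ_{t∈Ts} Y_t Z_t'` for ℤ-indexed column-vector series. -/
noncomputable def SXY (Ts : Finset ℤ) {m n : Type*} [Fintype m] [Fintype n]
    (Y : ℤ → Matrix m (Fin 1) ℝ) (Z : ℤ → Matrix n (Fin 1) ℝ) : Matrix m n ℝ :=
  ∑ t ∈ Ts, Y t * (Z t)ᵀ

/-- Quadratic form `Q(Z) = (Σ ε Z')(Σ Z Z')⁻¹(Σ Z ε')`. -/
noncomputable def Qform (Ts : Finset ℤ) {p : ℕ} {n : Type*} [Fintype n] [DecidableEq n]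
    (ε : ℤ → Matrix (Fin p) (Fin 1) ℝ) (Z : ℤ → Matrix n (Fin 1) ℝ) :
    Matrix (Fin p) (Fin p) ℝ :=
  SXY Ts ε Z * (SXY Ts Z Z)⁻¹ * SXY Ts Z ε

/-- Least-squares residual series `(Y_t | Z_t)`. -/
noncomputable def resid (Ts : Finset ℤ) {m n : Type*} [Fintype m] [Fintype n] [DecidableEq n]
    (Y : ℤ → Matrix m (Fin 1) ℝ) (Z : ℤ → Matrix n (Fin 1) ℝ) : ℤ → Matrix m (Fin 1) ℝ :=
  fun t => Y t - SXY Ts Y Z * (SXY Ts Z Z)⁻¹ * Z t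

/-- The stacked lag vector `X_t^{bold} = (X_t', …, X_{t-k+2}')'` (k-1 lags). -/
noncomputable def Xbold {p : ℕ} (k : ℕ) (X : ℤ → Matrix (Fin p) (Fin 1) ℝ) (t : ℤ) :
    Matrix (Fin (k - 1) × Fin p) (Fin 1) ℝ :=
  fun li j => X (t - (li.1 : ℤ)) li.2 j

/-!
Both `(X_{t-k}; 𝐗_{t-1})` and `(X_{t-1}; 𝐗_{t-2})` are reorderings of the `k`-lag stack
`(X_{t-1}, …, X_{t-k})`, so after appending `D_t` they have the same quadratic form. Expanding
each side with the Frisch–Waugh–Lovell identity `Q(U, V) = Q(V) + Q(U | V)`, twice, gives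
`Q(D) + Q(𝐗_{t-1} | D) + Q(X_{t-k} | 𝐗_{t-1}, D)`
`  = Q(D) + Q(𝐗_{t-2} | D) + Q(X_{t-1} | 𝐗_{t-2}, D)`.
Finally, by the model and `D_{t-1} = D⁻¹ D_t`, `ε_{t-1}` differs from `X_{t-1}` by a linear
function of the regressors `(𝐗_{t-2}, D_t)`, so both have the same residual on them.
-/

section SampleMoments

variable {Ts : Finset ℤ} {a b c : Type*} [Fintype a] [Fintype b] [Fintype c]

lemma SXY_transpose (Y : ℤ → Matrix a (Fin 1) ℝ) (Z : ℤ → Matrix b (Fin 1) ℝ) :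
    (SXY Ts Y Z)ᵀ = SXY Ts Z Y := by
  simp [SXY, transpose_sum, transpose_mul]

lemma SXY_mul_left (M : Matrix c a ℝ) (Y : ℤ → Matrix a (Fin 1) ℝ)
    (Z : ℤ → Matrix b (Fin 1) ℝ) :
    SXY Ts (fun t => M * Y t) Z = M * SXY Ts Y Z := by
  simp only [SXY, Matrix.mul_assoc, Matrix.mul_sum]

lemma SXY_mul_right (M : Matrix c b ℝ) (Y : ℤ → Matrix a (Fin 1) ℝ)
    (Z : ℤ → Matrix b (Fin 1) ℝ) :
    SXY Ts Y (fun t => M * Z t) = SXY Ts Y Z * Mᵀ := by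
  simp only [SXY, transpose_mul, Matrix.sum_mul, Matrix.mul_assoc]

lemma SXY_sub_left (Y Y' : ℤ → Matrix a (Fin 1) ℝ) (Z : ℤ → Matrix b (Fin 1) ℝ) :
    SXY Ts (fun t => Y t - Y' t) Z = SXY Ts Y Z - SXY Ts Y' Z := by
  simp only [SXY, Matrix.sub_mul, Finset.sum_sub_distrib]

lemma SXY_fromRows_left (U : ℤ → Matrix a (Fin 1) ℝ) (V : ℤ → Matrix b (Fin 1) ℝ)
    (Y : ℤ → Matrix c (Fin 1) ℝ) :
    SXY Ts (fun t => fromRows (U t) (V t)) Y = fromRows (SXY Ts U Y) (SXY Ts V Y) := by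
  ext (i | i) j <;> simp [SXY, Matrix.sum_apply, Matrix.mul_apply]

lemma SXY_fromRows_right (Y : ℤ → Matrix c (Fin 1) ℝ) (U : ℤ → Matrix a (Fin 1) ℝ)
    (V : ℤ → Matrix b (Fin 1) ℝ) :
    SXY Ts Y (fun t => fromRows (U t) (V t)) = fromCols (SXY Ts Y U) (SXY Ts Y V) := by
  ext i (j | j) <;> simp [SXY, Matrix.sum_apply, Matrix.mul_apply]

lemma SXY_fromRows_fromRows {a' b' : Type*} [Fintype a'] [Fintype b']
    (U : ℤ → Matrix a (Fin 1) ℝ) (V : ℤ → Matrix b (Fin 1) ℝ)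
    (U' : ℤ → Matrix a' (Fin 1) ℝ) (V' : ℤ → Matrix b' (Fin 1) ℝ) :
    SXY Ts (fun t => fromRows (U t) (V t)) (fun t => fromRows (U' t) (V' t))
      = fromBlocks (SXY Ts U U') (SXY Ts U V') (SXY Ts V U') (SXY Ts V V') := by
  ext (i | i) (j | j) <;> simp [SXY, Matrix.sum_apply, Matrix.mul_apply]

lemma SXY_submatrix_left {a' : Type*} [Fintype a'] (e : a' ≃ a) (Y : ℤ → Matrix a (Fin 1) ℝ)
    (Z : ℤ → Matrix b (Fin 1) ℝ) :
    SXY Ts (fun t => (Y t).submatrix e id) Z = (SXY Ts Y Z).submatrix e id := by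
  ext i j
  simp [SXY, Matrix.sum_apply, Matrix.mul_apply]

lemma SXY_submatrix_right {b' : Type*} [Fintype b'] (e : b' ≃ b) (Y : ℤ → Matrix a (Fin 1) ℝ)
    (Z : ℤ → Matrix b (Fin 1) ℝ) :
    SXY Ts Y (fun t => (Z t).submatrix e id) = (SXY Ts Y Z).submatrix id e := by
  ext i j
  simp [SXY, Matrix.sum_apply, Matrix.mul_apply]

variable [DecidableEq b]

lemma SXY_resid_left_eq_zero {Z : ℤ → Matrix b (Fin 1) ℝ} (hZ : IsUnit (SXY Ts Z Z).det)
    (Y : ℤ → Matrix a (Fin 1) ℝ) : SXY Ts (resid Ts Y Z) Z = 0 := by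
  rw [show resid Ts Y Z = fun t => Y t - (SXY Ts Y Z * (SXY Ts Z Z)⁻¹) * Z t from rfl,
    SXY_sub_left, SXY_mul_left, Matrix.mul_assoc,
    Matrix.nonsing_inv_mul _ hZ, Matrix.mul_one, sub_self]

lemma resid_sub_mul {Z : ℤ → Matrix b (Fin 1) ℝ} (hZ : IsUnit (SXY Ts Z Z).det)
    (Y : ℤ → Matrix a (Fin 1) ℝ) (L : Matrix a b ℝ) :
    resid Ts (fun t => Y t - L * Z t) Z = resid Ts Y Z := by
  funext t
  simp only [resid, SXY_sub_left, SXY_mul_left, Matrix.sub_mul, Matrix.mul_assoc L,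
    Matrix.mul_nonsing_inv _ hZ, Matrix.mul_one]
  abel

variable {p : ℕ} (ε : ℤ → Matrix (Fin p) (Fin 1) ℝ)

lemma Qform_mul_left (Z : ℤ → Matrix b (Fin 1) ℝ) {M : Matrix b b ℝ} (hM : IsUnit M.det) :
    Qform Ts ε (fun t => M * Z t) = Qform Ts ε Z := by
  have hMT : IsUnit Mᵀ.det := by rwa [det_transpose]
  simp only [Qform, SXY_mul_left, SXY_mul_right, Matrix.mul_inv_rev, Matrix.mul_assoc]
  rw [← Matrix.mul_assoc Mᵀ, Matrix.mul_nonsing_inv _ hMT, Matrix.one_mul,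
    ← Matrix.mul_assoc M⁻¹, Matrix.nonsing_inv_mul _ hM, Matrix.one_mul]

lemma Qform_submatrix {b' : Type*} [Fintype b'] [DecidableEq b'] (e : b' ≃ b)
    (Z : ℤ → Matrix b (Fin 1) ℝ) :
    Qform Ts ε (fun t => (Z t).submatrix e id) = Qform Ts ε Z := by
  simp only [Qform, SXY_submatrix_left, SXY_submatrix_right, submatrix_submatrix,
    Function.comp_id, Function.id_comp]
  rw [inv_submatrix_equiv, submatrix_mul_equiv, submatrix_mul_equiv, submatrix_id_id]

lemma Qform_fromRows_of_SXY_eq_zero [DecidableEq a] (U : ℤ → Matrix a (Fin 1) ℝ)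
    (V : ℤ → Matrix b (Fin 1) ℝ) (hUV : SXY Ts U V = 0) (hU : IsUnit (SXY Ts U U).det)
    (hV : IsUnit (SXY Ts V V).det) :
    Qform Ts ε (fun t => fromRows (U t) (V t)) = Qform Ts ε U + Qform Ts ε V := by
  have hVU : SXY Ts V U = 0 := by rw [← SXY_transpose, hUV, transpose_zero]
  have hinv : (fromBlocks (SXY Ts U U) 0 0 (SXY Ts V V))⁻¹
      = fromBlocks (SXY Ts U U)⁻¹ 0 0 (SXY Ts V V)⁻¹ := by
    rw [inv_fromBlocks_zero₂₁_of_isUnit_iff _ _ _ <|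
      iff_of_true ((isUnit_iff_isUnit_det _).mpr hU) ((isUnit_iff_isUnit_det _).mpr hV)]
    simp
  rw [Qform, SXY_fromRows_fromRows, SXY_fromRows_right, SXY_fromRows_left, hUV, hVU, hinv,
    fromCols_mul_fromBlocks, fromCols_mul_fromRows]
  simp [Qform]

/-- Frisch–Waugh–Lovell. -/
lemma Qform_fromRows [DecidableEq a] (U : ℤ → Matrix a (Fin 1) ℝ)
    {V : ℤ → Matrix b (Fin 1) ℝ} (hV : IsUnit (SXY Ts V V).det)
    (hU : IsUnit (SXY Ts (resid Ts U V) (resid Ts U V)).det) :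
    Qform Ts ε (fun t => fromRows (U t) (V t)) = Qform Ts ε V + Qform Ts ε (resid Ts U V) := by
  set B := SXY Ts U V * (SXY Ts V V)⁻¹
  have hM : IsUnit (fromBlocks (1 : Matrix a a ℝ) (-B) 0 1).det := by simp
  have hrows : ∀ t, fromRows (resid Ts U V t) (V t)
      = fromBlocks (1 : Matrix a a ℝ) (-B) 0 1 * fromRows (U t) (V t) := by
    intro t
    simp [fromBlocks_mul_fromRows, resid, B, sub_eq_add_neg]
  rw [← Qform_mul_left ε _ hM, ← funext hrows, add_comm,
    Qform_fromRows_of_SXY_eq_zero ε _ _ (SXY_resid_left_eq_zero hV U) hU hV]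

lemma Qform_fromRows_assoc {d : Type*} [Fintype d] [DecidableEq a] [DecidableEq c]
    [DecidableEq d] (U : ℤ → Matrix a (Fin 1) ℝ) (V : ℤ → Matrix b (Fin 1) ℝ)
    (W : ℤ → Matrix d (Fin 1) ℝ) (S : ℤ → Matrix c (Fin 1) ℝ)
    (e : a ⊕ b ≃ c) (hS : ∀ t, fromRows (U t) (V t) = (S t).submatrix e id) :
    Qform Ts ε (fun t => fromRows (U t) (fromRows (V t) (W t)))
      = Qform Ts ε (fun t => fromRows (S t) (W t)) := by
  rw [← Qform_submatrix ε ((Equiv.sumAssoc a b d).symm.trans (e.sumCongr (Equiv.refl d)))]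
  congr 1
  funext t
  ext (i | i | i) j
  · exact congrFun (congrFun (hS t) (.inl i)) j
  · exact congrFun (congrFun (hS t) (.inr i)) j
  · rfl

end SampleMoments

section Lags

variable {p : ℕ}

def lagStack (n : ℕ) (X : ℤ → Matrix (Fin p) (Fin 1) ℝ) (t : ℤ) :
    Matrix (Fin n × Fin p) (Fin 1) ℝ :=
  fun li j => X (t - (li.1 : ℤ)) li.2 j

lemma Xbold_eq_lagStack (k : ℕ) (X : ℤ → Matrix (Fin p) (Fin 1) ℝ) (t : ℤ) :
    Xbold k X t = lagStack (k - 1) X t :=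
  rfl

def consLagEquiv (n p : ℕ) : Fin p ⊕ (Fin n × Fin p) ≃ Fin (n + 1) × Fin p where
  toFun := Sum.elim (fun j => (0, j)) (fun ij => (ij.1.succ, ij.2))
  invFun lj := Fin.cases (.inl lj.2) (fun i => .inr (i, lj.2)) lj.1
  left_inv := by rintro (j | ⟨i, j⟩) <;> simp
  right_inv := by
    rintro ⟨l, j⟩
    cases l using Fin.cases <;> simp

def snocLagEquiv (n p : ℕ) : Fin p ⊕ (Fin n × Fin p) ≃ Fin (n + 1) × Fin p where
  toFun := Sum.elim (fun j => (Fin.last n, j)) (fun ij => (ij.1.castSucc, ij.2))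
  invFun lj := Fin.lastCases (.inl lj.2) (fun i => .inr (i, lj.2)) lj.1
  left_inv := by rintro (j | ⟨i, j⟩) <;> simp
  right_inv := by
    rintro ⟨l, j⟩
    cases l using Fin.lastCases <;> simp

lemma fromRows_lagStack_cons (n : ℕ) (X : ℤ → Matrix (Fin p) (Fin 1) ℝ) (t : ℤ) :
    fromRows (X t) (lagStack n X (t - 1))
      = (lagStack (n + 1) X t).submatrix (consLagEquiv n p) id := by
  ext (j | ⟨i, j⟩) c
  · simp [lagStack, consLagEquiv]
  · simp [lagStack, consLagEquiv]
    ring_nf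

lemma fromRows_lagStack_snoc (n : ℕ) (X : ℤ → Matrix (Fin p) (Fin 1) ℝ) (t : ℤ) :
    fromRows (X (t - n)) (lagStack n X t)
      = (lagStack (n + 1) X t).submatrix (snocLagEquiv n p) id := by
  ext (j | ⟨i, j⟩) c <;> simp [lagStack, snocLagEquiv]

def lagCoeff {n : ℕ} (A : Fin n → Matrix (Fin p) (Fin p) ℝ) : Matrix (Fin p) (Fin n × Fin p) ℝ :=
  fun i lj => A lj.1 i lj.2

lemma lagCoeff_mul_lagStack {n : ℕ} (A : Fin n → Matrix (Fin p) (Fin p) ℝ)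
    (X : ℤ → Matrix (Fin p) (Fin 1) ℝ) (t : ℤ) :
    lagCoeff A * lagStack n X t = ∑ l, A l * X (t - l) := by
  ext i c
  simp [lagCoeff, lagStack, Matrix.mul_apply, Matrix.sum_apply, Fintype.sum_prod_type]

end Lags

lemma innovation_eq_sub_mul_regressors {p n m : ℕ} (X ε : ℤ → Matrix (Fin p) (Fin 1) ℝ)
    (D : ℤ → Matrix (Fin m) (Fin 1) ℝ) {Dmat : Matrix (Fin m) (Fin m) ℝ}
    (hDmat : IsUnit Dmat.det) (hDrec : ∀ t : ℤ, D t = Dmat * D (t - 1))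
    (A : Fin n → Matrix (Fin p) (Fin p) ℝ) (μ : Matrix (Fin p) (Fin m) ℝ)
    (hmodel : ∀ t : ℤ, X t = (∑ l : Fin n, A l * X (t - ((l : ℤ) + 1))) + μ * D t + ε t)
    (t : ℤ) :
    ε (t - 1) = X (t - 1)
      - fromCols (lagCoeff A) (μ * Dmat⁻¹) * fromRows (lagStack n X (t - 2)) (D t) := by
  have hD : Dmat⁻¹ * D t = D (t - 1) := by
    rw [hDrec t, ← Matrix.mul_assoc, nonsing_inv_mul _ hDmat, Matrix.one_mul]
  have hlags : ∑ l : Fin n, A l * X (t - 2 - l) = ∑ l : Fin n, A l * X (t - 1 - ((l : ℤ) + 1)) :=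
    Finset.sum_congr rfl fun l _ => by ring_nf
  rw [fromCols_mul_fromRows, lagCoeff_mul_lagStack, Matrix.mul_assoc, hD, hlags,
    hmodel (t - 1)]
  abel

theorem qform_var_decomposition_general {p k m : ℕ} (hk : 2 ≤ k)
    (X ε : ℤ → Matrix (Fin p) (Fin 1) ℝ)
    (D : ℤ → Matrix (Fin m) (Fin 1) ℝ)
    (Dmat : Matrix (Fin m) (Fin m) ℝ)
    (hDmat : IsUnit Dmat.det)
    (hDrec : ∀ t : ℤ, D t = Dmat * D (t - 1))
    (A : Fin (k - 1) → Matrix (Fin p) (Fin p) ℝ)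
    (μ : Matrix (Fin p) (Fin m) ℝ)
    (hmodel : ∀ t : ℤ, X t = (∑ l : Fin (k - 1), A l * X (t - ((l : ℤ) + 1))) + μ * D t + ε t)
    (Ts : Finset ℤ)
    -- regressor series
    (W1 : ℤ → Matrix ((Fin (k - 1) × Fin p) ⊕ Fin m) (Fin 1) ℝ)
    (hW1 : ∀ t, W1 t = Matrix.fromRows (Xbold k X (t - 1)) (D t))
    (W2 : ℤ → Matrix ((Fin (k - 1) × Fin p) ⊕ Fin m) (Fin 1) ℝ)
    (hW2 : ∀ t, W2 t = Matrix.fromRows (Xbold k X (t - 2)) (D t))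
    -- invertibility of all relevant Gram matrices
    (hG1 : IsUnit (SXY Ts W1 W1).det)
    (hG2 : IsUnit (SXY Ts W2 W2).det)
    (hGD : IsUnit (SXY Ts D D).det)
    (hGres : IsUnit (SXY Ts (resid Ts (fun t => X (t - (k : ℤ))) W1)
      (resid Ts (fun t => X (t - (k : ℤ))) W1)).det)
    (hGb1 : IsUnit (SXY Ts (resid Ts (fun t => Xbold k X (t - 1)) D)
      (resid Ts (fun t => Xbold k X (t - 1)) D)).det)
    (hGb2 : IsUnit (SXY Ts (resid Ts (fun t => Xbold k X (t - 2)) D)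
      (resid Ts (fun t => Xbold k X (t - 2)) D)).det)
    (hGe : IsUnit (SXY Ts (resid Ts (fun t => ε (t - 1)) W2)
      (resid Ts (fun t => ε (t - 1)) W2)).det) :
    Qform Ts ε (resid Ts (fun t => X (t - (k : ℤ))) W1)
      = Qform Ts ε (resid Ts (fun t => Xbold k X (t - 2)) D)
        - Qform Ts ε (resid Ts (fun t => Xbold k X (t - 1)) D)
        + Qform Ts ε (resid Ts (fun t => ε (t - 1)) W2) := by
  obtain rfl : W1 = _ := funext hW1
  obtain rfl : W2 = _ := funext hW2
  have hεX : resid Ts (fun t => ε (t - 1)) (fun t => fromRows (Xbold k X (t - 2)) (D t))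
      = resid Ts (fun t => X (t - 1)) (fun t => fromRows (Xbold k X (t - 2)) (D t)) := by
    simp only [innovation_eq_sub_mul_regressors X ε D hDmat hDrec A μ hmodel]
    exact resid_sub_mul hG2 _ _
  have hsnoc : ∀ t : ℤ, fromRows (X (t - k)) (Xbold k X (t - 1))
      = (lagStack (k - 1 + 1) X (t - 1)).submatrix (snocLagEquiv (k - 1) p) id := by
    intro t
    rw [← fromRows_lagStack_snoc, Xbold_eq_lagStack,
      show t - k = t - 1 - ((k - 1 : ℕ) : ℤ) by omega]
  have hcons : ∀ t : ℤ, fromRows (X (t - 1)) (Xbold k X (t - 2))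
      = (lagStack (k - 1 + 1) X (t - 1)).submatrix (consLagEquiv (k - 1) p) id := by
    intro t
    rw [← fromRows_lagStack_cons, Xbold_eq_lagStack, sub_sub, one_add_one_eq_two]
  have hstack := (Qform_fromRows_assoc (Ts := Ts) ε _ _ D _ _ hsnoc).trans
    (Qform_fromRows_assoc ε _ _ D _ _ hcons).symm
  rw [Qform_fromRows ε _ hG1 hGres, Qform_fromRows ε _ hG2 (hεX ▸ hGe), ← hεX,
    Qform_fromRows ε _ hGD hGb1, Qform_fromRows ε _ hGD hGb2] at hstack
  rw [eq_sub_of_add_eq' hstack]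
  abel

/-- Lemma 3.2 of Nielsen: algebraic decomposition of the quadratic form in a VAR with
`A_k = 0`, `Q(X_{t-k}|𝐗_{t-1},D_t) = Q(𝐗_{t-2}|D_t) - Q(𝐗_{t-1}|D_t) + Q(ε_{t-1}|𝐗_{t-2},D_t)`. -/
theorem qform_var_decomposition {p k m : ℕ} (T : ℕ) (hk : 2 ≤ k)
    (X ε : ℤ → Matrix (Fin p) (Fin 1) ℝ)
    (D : ℤ → Matrix (Fin m) (Fin 1) ℝ)
    (Dmat : Matrix (Fin m) (Fin m) ℝ)
    (hDmat : IsUnit Dmat.det)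
    (hDrec : ∀ t : ℤ, D t = Dmat * D (t - 1))
    (A : Fin (k - 1) → Matrix (Fin p) (Fin p) ℝ)
    (μ : Matrix (Fin p) (Fin m) ℝ)
    (hmodel : ∀ t : ℤ, X t = (∑ l : Fin (k - 1), A l * X (t - ((l : ℤ) + 1))) + μ * D t + ε t)
    (Ts : Finset ℤ) (hTs : Ts = Finset.Icc 1 (T : ℤ))
    -- regressor series
    (W1 : ℤ → Matrix ((Fin (k - 1) × Fin p) ⊕ Fin m) (Fin 1) ℝ)
    (hW1 : ∀ t, W1 t = Matrix.fromRows (Xbold k X (t - 1)) (D t))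
    (W2 : ℤ → Matrix ((Fin (k - 1) × Fin p) ⊕ Fin m) (Fin 1) ℝ)
    (hW2 : ∀ t, W2 t = Matrix.fromRows (Xbold k X (t - 2)) (D t))
    -- invertibility of all relevant Gram matrices
    (hG1 : IsUnit (SXY Ts W1 W1).det)
    (hG2 : IsUnit (SXY Ts W2 W2).det)
    (hGD : IsUnit (SXY Ts D D).det)
    (hGres : IsUnit (SXY Ts (resid Ts (fun t => X (t - (k : ℤ))) W1)
      (resid Ts (fun t => X (t - (k : ℤ))) W1)).det)
    (hGb1 : IsUnit (SXY Ts (resid Ts (fun t => Xbold k X (t - 1)) D)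
      (resid Ts (fun t => Xbold k X (t - 1)) D)).det)
    (hGb2 : IsUnit (SXY Ts (resid Ts (fun t => Xbold k X (t - 2)) D)
      (resid Ts (fun t => Xbold k X (t - 2)) D)).det)
    (hGe : IsUnit (SXY Ts (resid Ts (fun t => ε (t - 1)) W2)
      (resid Ts (fun t => ε (t - 1)) W2)).det) :
    Qform Ts ε (resid Ts (fun t => X (t - (k : ℤ))) W1)
      = Qform Ts ε (resid Ts (fun t => Xbold k X (t - 2)) D)
        - Qform Ts ε (resid Ts (fun t => Xbold k X (t - 1)) D)
        + Qform Ts ε (resid Ts (fun t => ε (t - 1)) W2) :=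
  qform_var_decomposition_general hk X ε D Dmat hDmat hDrec A μ hmodel Ts W1 hW1 W2 hW2 hG1 hG2 hGD
    hGres hGb1 hGb2 hGe
end

section
/- Let Ω̂_j be p×p symmetric positive definite matrices with Ω̂_j → Ω almost surely (Ω positive definite), and suppose T(Ω̂_{j} - Ω̂_{j+1}) = o(g(T)) almost surely for a positive function g with f(T)/g(T) → ∞ and f(T)/T → 0. Then the penalized criterion difference Φ_{j+1} - Φ_j = log det(Ω̂_{j+1}) - log det(Ω̂_j) + f(T)/T is eventually positive almost surely. In particular, an information criterion with penalty f does not select lag j+1 over lag j in the limit. -/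
open Matrix Filter MeasureTheory

attribute [local instance] Matrix.frobeniusNormedAddCommGroup
attribute [local instance] Matrix.frobeniusNormedSpace

/-! Near the positive definite limit `Ω`, `A ↦ log det A` is `C¹`, hence locally Lipschitz
with some constant `K`. So `|log det Ω̂_{j+1} - log det Ω̂_j| ≤ K ‖Ω̂_j - Ω̂_{j+1}‖ = o(g(T)/T)`,
which is eventually smaller than the penalty `f(T)/T` because `g = o(f)`. -/

theorem Matrix.contDiff_det {𝕜 n : Type*} [NontriviallyNormedField 𝕜] [CompleteSpace 𝕜]
    [Fintype n] [DecidableEq n] {k : WithTop ℕ∞} :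
    ContDiff 𝕜 k (det : Matrix n n 𝕜 → 𝕜) := by
  have hentry (i j : n) : ContDiff 𝕜 k fun A : Matrix n n 𝕜 => A i j :=
    (entryLinearMap 𝕜 𝕜 i j).toContinuousLinearMap.contDiff
  simp_rw [funext fun A : Matrix n n 𝕜 => det_apply A]
  exact ContDiff.sum fun σ _ => (contDiff_prod fun i _ => hentry (σ i) i).const_smul _

theorem Matrix.contDiffAt_log_det {n : Type*} [Fintype n] [DecidableEq n] {k : WithTop ℕ∞}
    {A : Matrix n n ℝ} (hA : A.det ≠ 0) :
    ContDiffAt ℝ k (fun B : Matrix n n ℝ => Real.log B.det) A :=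
  (Real.contDiffAt_log.mpr hA).comp A contDiff_det.contDiffAt

theorem ContDiffAt.exists_eventually_abs_sub_le {E ι : Type*} [NormedAddCommGroup E]
    [NormedSpace ℝ E] {F : E → ℝ} {L : E} (hF : ContDiffAt ℝ 1 F L) {l : Filter ι}
    {x y : ι → E} (hx : Tendsto x l (nhds L)) (hy : Tendsto y l (nhds L)) :
    ∃ K : ℝ, ∀ᶠ i in l, |F (x i) - F (y i)| ≤ K * ‖x i - y i‖ := by
  obtain ⟨K, s, hs, hK⟩ := hF.exists_lipschitzOnWith
  refine ⟨K, ?_⟩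
  filter_upwards [hx.eventually_mem hs, hy.eventually_mem hs] with i hxi hyi
  simpa [Real.dist_eq, dist_eq_norm] using hK.dist_le_mul _ hxi _ hyi

/-- Writing `d = ε g / T` with `ε → 0` and `f = ρ g` with `ρ → ∞`: eventually `K ε < 1 < ρ`. -/
theorem eventually_mul_lt_div_natCast {d f g : ℕ → ℝ} (K : ℝ) (hg : ∀ T, 0 < g T)
    (hd : Tendsto (fun T : ℕ => (T : ℝ) * d T / g T) atTop (nhds 0))
    (hfg : Tendsto (fun T => f T / g T) atTop atTop) :
    ∀ᶠ T in atTop, K * d T < f T / (T : ℝ) := by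
  have hsmall : ∀ᶠ T : ℕ in atTop, K * ((T : ℝ) * d T / g T) < 1 := by
    refine (hd.const_mul K).eventually (gt_mem_nhds ?_)
    simp
  filter_upwards [hsmall, hfg.eventually_gt_atTop 1, eventually_gt_atTop 0]
    with T hsmall hlarge hT
  have hT : (0 : ℝ) < T := by exact_mod_cast hT
  have hgT := hg T
  calc K * d T = K * ((T : ℝ) * d T / g T) * (g T / T) := by field_simp
    _ < f T / g T * (g T / T) := by gcongr; linarith
    _ = f T / T := by field_simp

theorem criterion_difference_eventually_positive_general {p : ℕ}
    {Ωs : Type*} [MeasureSpace Ωs] (μ : Measure Ωs)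
    (Ωj Ωj1 : ℕ → Ωs → Matrix (Fin p) (Fin p) ℝ)
    (Ωlim : Matrix (Fin p) (Fin p) ℝ) (hΩlim : Ωlim.PosDef)
    (f g : ℕ → ℝ) (hg : ∀ T, 0 < g T)
    (hfg : Tendsto (fun T => f T / g T) atTop atTop)
    (hconv : ∀ᵐ ω ∂μ, Tendsto (fun T => Ωj T ω) atTop (nhds Ωlim) ∧
      Tendsto (fun T => Ωj1 T ω) atTop (nhds Ωlim))
    (hdiff : ∀ᵐ ω ∂μ,
      Tendsto (fun T : ℕ => (T : ℝ) * ‖Ωj T ω - Ωj1 T ω‖ / g T) atTop (nhds 0)) :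
    ∀ᵐ ω ∂μ, ∀ᶠ T in atTop,
      0 < Real.log (Ωj1 T ω).det - Real.log (Ωj T ω).det + f T / (T : ℝ) := by
  filter_upwards [hconv, hdiff] with ω ⟨hj, hj1⟩ hd
  obtain ⟨K, hlip⟩ :=
    (contDiffAt_log_det hΩlim.det_pos.ne').exists_eventually_abs_sub_le hj hj1
  filter_upwards [hlip, eventually_mul_lt_div_natCast K hg hd hfg] with T hlipT hpenalty
  linarith [le_abs_self (Real.log (Ωj T ω).det - Real.log (Ωj1 T ω).det)]

/-- If `Ω̂_j(T), Ω̂_{j+1}(T)` are a.s. positive definite, converge a.s. to a positive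
definite `Ω`, and `T(Ω̂_j - Ω̂_{j+1}) = o(g(T))` a.s. with `f/g → ∞` and `f(T)/T → 0`,
then the information-criterion difference
`Φ_{j+1} - Φ_j = log det Ω̂_{j+1} - log det Ω̂_j + f(T)/T` is eventually positive a.s. -/
theorem criterion_difference_eventually_positive {p : ℕ}
    {Ωs : Type*} [MeasureSpace Ωs] (μ : Measure Ωs) [IsProbabilityMeasure μ]
    (Ωj Ωj1 : ℕ → Ωs → Matrix (Fin p) (Fin p) ℝ)
    (Ωlim : Matrix (Fin p) (Fin p) ℝ) (hΩlim : Ωlim.PosDef)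
    (f g : ℕ → ℝ) (hg : ∀ T, 0 < g T)
    (hfg : Tendsto (fun T => f T / g T) atTop atTop)
    (hfT : Tendsto (fun T => f T / (T : ℝ)) atTop (nhds 0))
    (hpos : ∀ᵐ ω ∂μ, ∀ T, (Ωj T ω).PosDef ∧ (Ωj1 T ω).PosDef)
    (hconv : ∀ᵐ ω ∂μ, Tendsto (fun T => Ωj T ω) atTop (nhds Ωlim) ∧
      Tendsto (fun T => Ωj1 T ω) atTop (nhds Ωlim))
    (hdiff : ∀ᵐ ω ∂μ,
      Tendsto (fun T : ℕ => (T : ℝ) * ‖Ωj T ω - Ωj1 T ω‖ / g T) atTop (nhds 0)) :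
    ∀ᵐ ω ∂μ, ∀ᶠ T in atTop,
      0 < Real.log (Ωj1 T ω).det - Real.log (Ωj T ω).det + f T / (T : ℝ) :=
  criterion_difference_eventually_positive_general μ Ωj Ωj1 Ωlim hΩlim f g hg hfg hconv hdiff
end
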